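/- Let q ∈ K^* not a root of unity, α, ξ ∈ K^*, and suppose rational functions γ_{-M},…,γ_N ∈ K satisfy 1/(z-α) = ((-1/q)δ_{q^{-1}} - ξ)(∑_{n=-M}^{N} γ_n/(z - α q^n)) in K(z). Then αξ(1-q) = q^m for some integer m ≥ 1. -/

import Mathlib

/-!
The operator `(-1/q)δ_{q⁻¹} - ξ` sends `γ/(z - αqⁿ)` to a combination of simple
fractions with poles `αqⁿ` and `αqⁿ⁺¹`. As `q` is not a root of unity these poles are
pairwise distinct, so comparing coefficients gives, with `c = αξ(1 - q)` and `γ` extended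
by zero, `q γₙ₋₁ = γₙ (1 - c qⁿ) + [n = 0] (q - 1) α` for all `n`. Running this recurrence
down from `n > N` kills `γₙ` for `n ≥ 0`; running it up from `n < -M` kills `γₙ` for
`n < 0` unless `c = q⁻ⁿ` for some `n < 0`. Otherwise the equation at `n = 0` reads
`0 = (q - 1) α`.
-/

open Filter Function Finset

open Polynomial Lagrange in
theorem eq_zero_of_eventually_sum_div_sub_eq_zero {F ι : Type*} [Field F] [Infinite F]
    {s : Finset ι} {v b : ι → F} (hv : Set.InjOn v s)
    (h : ∀ᶠ z in cofinite, ∑ i ∈ s, b i / (z - v i) = 0) : ∀ i ∈ s, b i = 0 := by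
  classical
  set r : ι → F := fun i => b i / nodalWeight s v i
  -- the barycentric form of the interpolant of `r` is `nodal s v` times the given sum
  have hr : interpolate s v r = 0 := by
    refine eq_zero_of_infinite_isRoot _ (frequently_cofinite_iff_infinite.1 ?_)
    have hnodes : ∀ᶠ z in cofinite, ∀ i ∈ s, z ≠ v i :=
      s.eventually_all.2 fun i _ => eventually_cofinite_ne (v i)
    refine ((h.and hnodes).mono fun z ⟨hz, hzv⟩ => ?_).frequently
    rw [IsRoot.def, eval_interpolate_not_at_node r hzv]
    refine mul_eq_zero_of_right _ ((sum_congr rfl fun i hi => ?_).trans hz)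
    rw [mul_comm, ← mul_assoc, div_mul_cancel₀ _ (nodalWeight_ne_zero hv hi), div_eq_mul_inv]
  intro i hi
  have hri := eval_interpolate_at_node r hv hi
  rw [hr, eval_zero, eq_comm, div_eq_zero_iff] at hri
  exact hri.resolve_right (nodalWeight_ne_zero hv hi)

theorem zpow_injective_of_pow_ne_one {K : Type*} [Field K] {q : K} (hq0 : q ≠ 0)
    (hq : ∀ m : ℕ, 1 ≤ m → q ^ m ≠ 1) : Injective fun n : ℤ => q ^ n := by
  have hu : ¬IsOfFinOrder (Units.mk0 q hq0) := by
    rw [← Units.isOfFinOrder_val, isOfFinOrder_iff_pow_eq_one]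
    rintro ⟨m, hm, hqm⟩
    exact hq m hm hqm
  intro m n hmn
  exact injective_zpow_iff_not_isOfFinOrder.2 hu (Units.val_injective (by simpa using hmn))

theorem sum_comp_sub_one_eq_sum {M : Type*} [AddCommMonoid M] {s : Finset ℤ} {f : ℤ → M}
    (hf : support f ⊆ s) (hf' : support (fun n => f (n - 1)) ⊆ s) :
    ∑ n ∈ s, f (n - 1) = ∑ n ∈ s, f n := by
  rw [← finsum_eq_sum_of_support_subset _ hf, ← finsum_eq_sum_of_support_subset _ hf']
  exact finsum_comp_equiv (Equiv.subRight 1)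

section FiniteSupport

variable {M : Type*} [Zero M] {g : ℤ → M}

theorem eq_zero_on_Ici_of_finite_support (hg : (support g).Finite) {a : ℤ}
    (step : ∀ n, a < n → g n = 0 → g (n - 1) = 0) : ∀ n, a ≤ n → g n = 0 := by
  obtain ⟨u, hu⟩ := hg.bddAbove
  have above : ∀ n, u < n → g n = 0 := fun n hn => notMem_support.1 fun h => (hu h).not_gt hn
  intro n han
  rcases le_or_gt n (u + 1) with hn | hn
  · induction n, hn using Int.leInductionDown with
    | base => exact above _ (by omega)
    | pred n _ ih => exact step n (by omega) (ih (by omega))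
  · exact above n (by omega)

theorem eq_zero_on_Iic_of_finite_support (hg : (support g).Finite) {a : ℤ}
    (step : ∀ n, n < a → g n = 0 → g (n + 1) = 0) : ∀ n, n ≤ a → g n = 0 := by
  have hg' : (support fun n => g (-n)).Finite := hg.preimage neg_injective.injOn
  have := eq_zero_on_Ici_of_finite_support hg' (a := -a) fun n hn h => by
    simpa [neg_add_eq_sub] using step (-n) (by omega) h
  exact fun n hn => by simpa using this (-n) (by omega)

end FiniteSupport

theorem exists_pow_eq_of_recurrence {K : Type*} [Field K] {q c r : K} {g : ℤ → K}
    (hq : q ≠ 0) (hr : r ≠ 0) (hg : (support g).Finite)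
    (hrec : ∀ n, q * g (n - 1) = g n * (1 - c * q ^ n) + if n = 0 then r else 0) :
    ∃ m : ℕ, 1 ≤ m ∧ c = q ^ m := by
  by_contra! hc
  have nonneg : ∀ n, 0 ≤ n → g n = 0 := eq_zero_on_Ici_of_finite_support hg fun n hn hgn => by
    have h := hrec n
    rw [if_neg hn.ne', hgn, zero_mul, add_zero, mul_eq_zero] at h
    exact h.resolve_left hq
  have neg : ∀ n, n ≤ -1 → g n = 0 := eq_zero_on_Iic_of_finite_support hg fun n hn hgn => by
    have h := hrec (n + 1)
    rw [if_neg (by omega), add_sub_cancel_right, hgn, mul_zero, add_zero, eq_comm,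
      mul_eq_zero] at h
    refine h.resolve_right fun hcq => hc (-(n + 1)).toNat (by omega) ?_
    have : q ^ (n + 1) = (q ^ (-(n + 1)).toNat)⁻¹ := by
      rw [← zpow_natCast, Int.toNat_of_nonneg (by omega), zpow_neg, inv_inv]
    rwa [this, sub_eq_zero, eq_comm, mul_inv_eq_one₀ (pow_ne_zero _ hq)] at hcq
  have h := hrec 0
  rw [if_pos rfl, neg (0 - 1) (by omega), nonneg 0 le_rfl] at h
  exact hr (by simpa using h.symm)

section QDifference

variable {K : Type*} [Field K]

def qDeriv (q : K) (f : K → K) (z : K) : K :=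
  (f (q * z) - f z) / ((q - 1) * z)

def qDiffOp (q ξ : K) (f : K → K) (z : K) : K :=
  -1 / q * qDeriv q⁻¹ f z - ξ * f z

theorem qDeriv_sum {ι : Type*} (s : Finset ι) (f : ι → K → K) (q z : K) :
    qDeriv q (fun w => ∑ i ∈ s, f i w) z = ∑ i ∈ s, qDeriv q (f i) z := by
  simp only [qDeriv, ← sum_sub_distrib, sum_div]

theorem qDiffOp_sum {ι : Type*} (s : Finset ι) (f : ι → K → K) (q ξ z : K) :
    qDiffOp q ξ (fun w => ∑ i ∈ s, f i w) z = ∑ i ∈ s, qDiffOp q ξ (f i) z := by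
  simp only [qDiffOp, qDeriv_sum, mul_sum, ← sum_sub_distrib]

theorem qDeriv_div_sub {q z g β : K} (hq : q ≠ 1) (hz : z ≠ 0) (hqz : q * z ≠ β)
    (hzβ : z ≠ β) : qDeriv q (fun w => g / (w - β)) z = -g / ((q * z - β) * (z - β)) := by
  have := sub_ne_zero.2 hq
  have := sub_ne_zero.2 hqz
  have := sub_ne_zero.2 hzβ
  unfold qDeriv
  field_simp
  ring

theorem qDiffOp_div_sub {q ξ z g β : K} (hq0 : q ≠ 0) (hq1 : q ≠ 1) (hβ : β ≠ 0)
    (hz : z ≠ 0) (hzq : z ≠ q * β) (hzβ : z ≠ β) :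
    qDiffOp q ξ (fun w => g / (w - β)) z
      = g / ((q - 1) * β) / (z - q * β) - (g / ((q - 1) * β) + ξ * g) / (z - β) := by
  have hqz : q⁻¹ * z ≠ β := fun h => hzq (by rw [← h, mul_inv_cancel_left₀ hq0])
  rw [qDiffOp, qDeriv_div_sub (inv_ne_one.2 hq1) hz hqz hzβ]
  have := sub_ne_zero.2 hq1
  have := sub_ne_zero.2 hzq
  have := sub_ne_zero.2 hzβ
  have := sub_ne_zero.2 hqz
  field_simp
  ring

theorem qDiffOp_sum_div_sub {q α ξ z : K} (hq0 : q ≠ 0) (hq1 : q ≠ 1) (hα : α ≠ 0)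
    (hz : z ≠ 0) {s : Finset ℤ} {γ : ℤ → K} (hγ : support γ ⊆ s)
    (hγ' : support (fun n => γ (n - 1)) ⊆ s)
    (hzs : ∀ n ∈ s, z ≠ α * q ^ n ∧ z ≠ α * q ^ (n + 1)) :
    qDiffOp q ξ (fun w => ∑ n ∈ s, γ n / (w - α * q ^ n)) z
      = ∑ n ∈ s, (q * γ (n - 1) - γ n * (1 - α * ξ * (1 - q) * q ^ n))
          / ((q - 1) * (α * q ^ n)) / (z - α * q ^ n) := by
  set d : ℤ → K := fun n => γ n / ((q - 1) * (α * q ^ n))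
  have hterm : ∀ n ∈ s, qDiffOp q ξ (fun w => γ n / (w - α * q ^ n)) z
      = d n / (z - α * q ^ (n + 1)) - (d n + ξ * γ n) / (z - α * q ^ n) := by
    intro n hn
    have hqβ : q * (α * q ^ n) = α * q ^ (n + 1) := by rw [zpow_add_one₀ hq0]; ring
    rw [qDiffOp_div_sub hq0 hq1 (mul_ne_zero hα (zpow_ne_zero n hq0)) hz
      (hqβ ▸ (hzs n hn).2) (hzs n hn).1, hqβ]
  have hshift :
      ∑ n ∈ s, d n / (z - α * q ^ (n + 1)) = ∑ n ∈ s, d (n - 1) / (z - α * q ^ n) := by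
    have := sum_comp_sub_one_eq_sum (f := fun n => d n / (z - α * q ^ (n + 1)))
      (fun n hn => hγ fun h => hn (by simp [d, h])) (fun n hn => hγ' fun h => hn (by simp [d, h]))
    simpa only [sub_add_cancel] using this.symm
  rw [qDiffOp_sum, sum_congr rfl hterm, sum_sub_distrib, hshift, ← sum_sub_distrib]
  refine sum_congr rfl fun n _ => ?_
  have := sub_ne_zero.2 hq1
  simp only [d, zpow_sub_one₀ hq0]
  field_simp
  ring

theorem recurrence_of_eventually_eq_qDiffOp {q α ξ : K} (hq0 : q ≠ 0)
    (hq : ∀ m : ℕ, 1 ≤ m → q ^ m ≠ 1) (hα : α ≠ 0) {s : Finset ℤ} (hs : 0 ∈ s) {γ : ℤ → K}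
    (hγ : support γ ⊆ s) (hγ' : support (fun n => γ (n - 1)) ⊆ s)
    (h : ∀ᶠ z in cofinite,
      1 / (z - α) = qDiffOp q ξ (fun w => ∑ n ∈ s, γ n / (w - α * q ^ n)) z)
    (n : ℤ) : q * γ (n - 1) = γ n * (1 - α * ξ * (1 - q) * q ^ n)
      + if n = 0 then (q - 1) * α else 0 := by
  classical
  have hq1 : q ≠ 1 := by simpa using hq 1 le_rfl
  have hinj : Injective fun n : ℤ => α * q ^ n :=
    (mul_right_injective₀ hα).comp (zpow_injective_of_pow_ne_one hq0 hq)
  have : Infinite K := Infinite.of_injective _ hinj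
  set a : ℤ → K := fun n => (q * γ (n - 1) - γ n * (1 - α * ξ * (1 - q) * q ^ n))
      / ((q - 1) * (α * q ^ n))
  have hcoeff :
      ∀ᶠ z in cofinite, ∑ n ∈ s, (a n - if n = 0 then 1 else 0) / (z - α * q ^ n) = 0 := by
    filter_upwards [h, eventually_cofinite_ne 0, s.eventually_all.2 fun n _ =>
      (eventually_cofinite_ne (α * q ^ n)).and (eventually_cofinite_ne (α * q ^ (n + 1)))]
      with z hz hz0 hzs
    rw [qDiffOp_sum_div_sub hq0 hq1 hα hz0 hγ hγ' hzs] at hz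
    simp only [sub_div, sum_sub_distrib, ite_div, zero_div, sum_ite_eq', if_pos hs,
      zpow_zero, mul_one]
    exact sub_eq_zero.2 hz.symm
  by_cases hn : n ∈ s
  · have han := eq_zero_of_eventually_sum_div_sub_eq_zero hinj.injOn hcoeff n hn
    rw [sub_eq_zero, div_eq_iff (mul_ne_zero (sub_ne_zero.2 hq1)
      (mul_ne_zero hα (zpow_ne_zero n hq0)))] at han
    split_ifs at han ⊢ with hn0
    · subst hn0
      simp only [zpow_zero, mul_one, one_mul] at han ⊢
      linear_combination han
    · linear_combination han
  · have hn0 : n ≠ 0 := fun h0 => hn (h0 ▸ hs)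
    rw [notMem_support.1 fun h => hn (hγ h), notMem_support.1 fun h => hn (hγ' h), if_neg hn0]
    ring

end QDifference

theorem q_difference_partial_fraction_forces_zero_general {K : Type*} [Field K]
    (q α ξ : K) (hq0 : q ≠ 0) (hq : ∀ m : ℕ, 1 ≤ m → q ^ m ≠ 1)
    (hα : α ≠ 0) (M N : ℕ) (γ : ℤ → K)
    (h : ∀ z : K, z ≠ 0 → z ≠ α →
      (∀ n ∈ Finset.Icc (-(M : ℤ)) (N : ℤ), z ≠ α * q ^ n ∧ q⁻¹ * z ≠ α * q ^ n) →
      1 / (z - α) =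
        (-1 / q) *
            (((∑ n ∈ Finset.Icc (-(M : ℤ)) (N : ℤ), γ n / (q⁻¹ * z - α * q ^ n)) -
                ∑ n ∈ Finset.Icc (-(M : ℤ)) (N : ℤ), γ n / (z - α * q ^ n)) /
              ((q⁻¹ - 1) * z)) -
          ξ * ∑ n ∈ Finset.Icc (-(M : ℤ)) (N : ℤ), γ n / (z - α * q ^ n)) :
    ∃ m : ℕ, 1 ≤ m ∧ α * ξ * (1 - q) = q ^ m := by
  classical
  have hq1 : q ≠ 1 := by simpa using hq 1 le_rfl
  set S := Icc (-(M : ℤ)) N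
  set R := Icc (-(M : ℤ)) (N + 1)
  have hSR : S ⊆ R := Icc_subset_Icc le_rfl (by omega)
  set γ' : ℤ → K := fun n => if n ∈ S then γ n else 0
  have hsupp : support γ' ⊆ S := fun n hn => by_contra fun hnS => hn (if_neg hnS)
  have hsupp' : support (fun n => γ' (n - 1)) ⊆ R := fun n hn => by
    have := hsupp hn
    simp only [S, R, coe_Icc, Set.mem_Icc] at this ⊢
    omega
  have hsum : ∀ w, ∑ n ∈ S, γ n / (w - α * q ^ n) = ∑ n ∈ R, γ' n / (w - α * q ^ n) := by
    intro w
    rw [← sum_subset hSR fun n _ hn => by simp [γ', hn]]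
    exact sum_congr rfl fun n hn => by simp [γ', hn]
  have hid : ∀ᶠ z in cofinite,
      1 / (z - α) = qDiffOp q ξ (fun w => ∑ n ∈ R, γ' n / (w - α * q ^ n)) z := by
    filter_upwards [eventually_cofinite_ne 0, eventually_cofinite_ne α,
      S.eventually_all.2 fun n _ => (eventually_cofinite_ne (α * q ^ n)).and
        (eventually_cofinite_ne (q * (α * q ^ n)))] with z hz0 hzα hzS
    simp only [← hsum]
    exact h z hz0 hzα fun n hn => ⟨(hzS n hn).1, fun hqz => (hzS n hn).2 (by
      rw [← hqz, mul_inv_cancel_left₀ hq0])⟩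
  exact exists_pow_eq_of_recurrence hq0 (mul_ne_zero (sub_ne_zero.2 hq1) hα)
    (S.finite_toSet.subset hsupp) (recurrence_of_eventually_eq_qDiffOp hq0 hq hα
      (mem_Icc.2 ⟨by omega, by omega⟩) (hsupp.trans hSR) hsupp' hid)

/-- Lemma 4.5.4 of André: if `1/(z-α) = ((-1/q)δ_{q⁻¹} - ξ)(∑_{n=-M}^{N} γ_n/(z-αqⁿ))`
in `K(z)` (stated pointwise away from the poles), then `αξ(1-q) = q^m` for some
integer `m ≥ 1`. -/
theorem q_difference_partial_fraction_forces_zero {K : Type*} [Field K] [CharZero K]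
    (q α ξ : K) (hq0 : q ≠ 0) (hq : ∀ m : ℕ, 1 ≤ m → q ^ m ≠ 1)
    (hα : α ≠ 0) (hξ : ξ ≠ 0) (M N : ℕ) (γ : ℤ → K)
    (h : ∀ z : K, z ≠ 0 → z ≠ α →
      (∀ n ∈ Finset.Icc (-(M : ℤ)) (N : ℤ), z ≠ α * q ^ n ∧ q⁻¹ * z ≠ α * q ^ n) →
      1 / (z - α) =
        (-1 / q) *
            (((∑ n ∈ Finset.Icc (-(M : ℤ)) (N : ℤ), γ n / (q⁻¹ * z - α * q ^ n)) -
                ∑ n ∈ Finset.Icc (-(M : ℤ)) (N : ℤ), γ n / (z - α * q ^ n)) /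
              ((q⁻¹ - 1) * z)) -
          ξ * ∑ n ∈ Finset.Icc (-(M : ℤ)) (N : ℤ), γ n / (z - α * q ^ n)) :
    ∃ m : ℕ, 1 ≤ m ∧ α * ξ * (1 - q) = q ^ m :=
  q_difference_partial_fraction_forces_zero_general q α ξ hq0 hq hα M N γ h
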